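/- arXiv:2501.04555 — 6 statements merged into one kernel-verified Lean document; each statement's English description precedes it below -/
import Mathlib

section
/- Let Γ be a graph, G a weighted graph on V(Γ) with edge weights d_Γ, and t ≥ 1. Let S be a set of nonedges of G such that G+S has dilation at most t with respect to Γ (i.e., d_{G+S}(u,v) ≤ t·d_Γ(u,v) for all u,v), and suppose S is minimal with this property. Then every endpoint u of an edge of S satisfies: there exists a vertex x that is in adjacent conflict in G (i.e., x has a Γ-neighbor y with d_G(x,y) > t) such that d_Γ(x,u) ≤ t. -/
open SimpleGraph

/-- The weight of a walk in `G`, where each edge `uv` is weighted by the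
shortest-path distance `Γ.dist u v` in the (unweighted) graph `Γ`. -/
noncomputable def walkWeight {V : Type*} (Γ G : SimpleGraph V) :
    {x y : V} → G.Walk x y → ℕ
  | x, _, .cons (v := v) _ p => Γ.dist x v + walkWeight Γ G p
  | _, _, .nil => 0

/-- Weighted shortest-path distance in `G`, with edge weights `Γ.dist`;
`⊤` if there is no walk. -/
noncomputable def wdist {V : Type*} (Γ G : SimpleGraph V) (x y : V) : ℕ∞ :=
  ⨅ p : G.Walk x y, (walkWeight Γ G p : ℕ∞)

section Aux

variable {V : Type*} {Γ G G' : SimpleGraph V} {x y z : V}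

lemma walkWeight_append (p : G.Walk x y) (q : G.Walk y z) :
    walkWeight Γ G (p.append q) = walkWeight Γ G p + walkWeight Γ G q := by
  induction p with
  | nil => simp [walkWeight]
  | cons h p ih => simp [walkWeight, ih]; ring

lemma wdist_le_walkWeight (p : G.Walk x y) :
    wdist Γ G x y ≤ (walkWeight Γ G p : ℕ∞) := iInf_le _ p

lemma exists_walk_of_wdist_le {n : ℕ} (h : wdist Γ G x y ≤ (n : ℕ∞)) :
    ∃ p : G.Walk x y, walkWeight Γ G p ≤ n := by
  by_contra hc
  push_neg at hc
  have h2 : ((n + 1 : ℕ) : ℕ∞) ≤ wdist Γ G x y := by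
    refine le_iInf fun p => ?_
    exact_mod_cast hc p
  have := le_trans h2 h
  exact absurd (by exact_mod_cast this) (by omega)

lemma walkWeight_transfer (p : G.Walk x y) (hp : ∀ e ∈ p.edges, e ∈ G'.edgeSet) :
    walkWeight Γ G' (p.transfer G' hp) = walkWeight Γ G p := by
  induction p with
  | nil => simp [SimpleGraph.Walk.transfer, walkWeight]
  | cons h p ih => simp [SimpleGraph.Walk.transfer, walkWeight, ih]

lemma wdist_anti (h : G ≤ G') : wdist Γ G' x y ≤ wdist Γ G x y := by
  refine le_iInf fun p => ?_
  have hp : ∀ e ∈ p.edges, e ∈ G'.edgeSet := fun e he =>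
    (SimpleGraph.edgeSet_mono h) (p.edges_subset_edgeSet he)
  calc wdist Γ G' x y ≤ (walkWeight Γ G' (p.transfer G' hp) : ℕ∞) :=
        wdist_le_walkWeight _
    _ = (walkWeight Γ G p : ℕ∞) := by rw [walkWeight_transfer]

lemma wdist_self : wdist Γ G x x = 0 := by
  refine le_antisymm ?_ bot_le
  have := wdist_le_walkWeight (Γ := Γ) (SimpleGraph.Walk.nil (u := x) (G := G))
  simpa [walkWeight] using this

lemma wdist_triangle : wdist Γ G x z ≤ wdist Γ G x y + wdist Γ G y z := by
  by_cases h1 : wdist Γ G x y = ⊤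
  · simp [h1]
  by_cases h2 : wdist Γ G y z = ⊤
  · simp [h2]
  obtain ⟨n1, hn1⟩ := WithTop.ne_top_iff_exists.mp h1
  obtain ⟨n2, hn2⟩ := WithTop.ne_top_iff_exists.mp h2
  obtain ⟨p, hp⟩ := exists_walk_of_wdist_le (Γ := Γ) (x := x) (y := y) (n := n1) (le_of_eq hn1.symm)
  obtain ⟨q, hq⟩ := exists_walk_of_wdist_le (Γ := Γ) (x := y) (y := z) (n := n2) (le_of_eq hn2.symm)
  calc wdist Γ G x z ≤ (walkWeight Γ G (p.append q) : ℕ∞) := wdist_le_walkWeight _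
    _ = (walkWeight Γ G p : ℕ∞) + (walkWeight Γ G q : ℕ∞) := by
        rw [walkWeight_append]; push_cast; ring
    _ ≤ wdist Γ G x y + wdist Γ G y z := by
        rw [← hn1, ← hn2]
        exact add_le_add (WithTop.coe_le_coe.mpr hp) (WithTop.coe_le_coe.mpr hq)

lemma dist_le_of_mem_support (hconn : Γ.Connected) (p : G.Walk x y) {w : V}
    (hw : w ∈ p.support) : Γ.dist x w ≤ walkWeight Γ G p := by
  induction p with
  | nil =>
    rw [SimpleGraph.Walk.support_nil, List.mem_singleton] at hw
    subst hw
    simp [SimpleGraph.dist_self, walkWeight]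
  | @cons a v c h p ih =>
    rcases (SimpleGraph.Walk.mem_support_iff _).mp hw with rfl | hw'
    · simp [SimpleGraph.dist_self]
    · calc Γ.dist a w ≤ Γ.dist a v + Γ.dist v w := hconn.dist_triangle
        _ ≤ Γ.dist a v + walkWeight Γ G p := by exact Nat.add_le_add_left (ih hw') _
        _ = walkWeight Γ G (SimpleGraph.Walk.cons h p) := rfl

lemma wdist_le_mul_of_adj (hconn : Γ.Connected) {t : ℕ}
    (hadj : ∀ a b : V, Γ.Adj a b → wdist Γ G a b ≤ (t : ℕ∞)) (p q : V) :
    wdist Γ G p q ≤ (t : ℕ∞) * (Γ.dist p q : ℕ∞) := by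
  obtain ⟨w, hw⟩ := hconn.exists_walk_length_eq_dist p q
  rw [← hw]
  clear hw
  induction w with
  | nil => simp [wdist_self]
  | @cons a v c h w ih =>
    calc wdist Γ G a c ≤ wdist Γ G a v + wdist Γ G v c := wdist_triangle
      _ ≤ (t : ℕ∞) + (t : ℕ∞) * (w.length : ℕ∞) := add_le_add (hadj a v h) ih
      _ = (t : ℕ∞) * (((SimpleGraph.Walk.cons h w).length : ℕ) : ℕ∞) := by
          simp [SimpleGraph.Walk.length_cons]
          ring

end Aux

/-- Endpoints of a minimal dilation `t`-augmentation set lie within `Γ`-distance `t`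
of some vertex in adjacent conflict: `V_S ⊆ N_Γ^t(V_c)`. -/
theorem endpoints_near_conflicts {V : Type*} [Fintype V]
    (Γ G S : SimpleGraph V) (hconn : Γ.Connected) (t : ℕ) (ht : 1 ≤ t)
    (hnonedge : ∀ x y : V, S.Adj x y → ¬ G.Adj x y)
    (hdil : ∀ u v : V, wdist Γ (G ⊔ S) u v ≤ (t : ℕ∞) * (Γ.dist u v : ℕ∞))
    (hmin : ∀ S' : SimpleGraph V, S' < S →
      ¬ (∀ u v : V, wdist Γ (G ⊔ S') u v ≤ (t : ℕ∞) * (Γ.dist u v : ℕ∞))) :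
    ∀ u : V, (∃ b, S.Adj u b) →
      ∃ x y : V, Γ.Adj x y ∧ (t : ℕ∞) < wdist Γ G x y ∧ Γ.dist x u ≤ t := by
  intro u hu
  obtain ⟨b, hub⟩ := hu
  set S' := S.deleteEdges {s(u, b)} with hS'def
  have hS'le : S' ≤ S := SimpleGraph.deleteEdges_le _
  have hS'lt : S' < S := by
    refine lt_of_le_of_ne hS'le fun hEq => ?_
    have : S'.Adj u b := hEq ▸ hub
    rw [hS'def, SimpleGraph.deleteEdges_adj] at this
    exact this.2 (by simp)
  have hfail := hmin S' hS'lt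
  -- there is an adjacent pair violating dilation in G ⊔ S'
  have hadjfail : ∃ x y : V, Γ.Adj x y ∧ (t : ℕ∞) < wdist Γ (G ⊔ S') x y := by
    by_contra hc
    push_neg at hc
    refine hfail fun p q => wdist_le_mul_of_adj hconn (fun a c hac => hc a c hac) p q
  obtain ⟨x, y, hxy, hlt⟩ := hadjfail
  refine ⟨x, y, hxy, ?_, ?_⟩
  · exact lt_of_lt_of_le hlt (wdist_anti (le_sup_left : G ≤ G ⊔ S'))
  · -- a short walk in G ⊔ S must use edge s(u,b); hence u is close to x
    have hdist1 : Γ.dist x y = 1 := SimpleGraph.dist_eq_one_iff_adj.mpr hxy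
    have h1 : wdist Γ (G ⊔ S) x y ≤ (t : ℕ∞) := by
      have := hdil x y
      rwa [hdist1, Nat.cast_one, mul_one] at this
    obtain ⟨w, hw⟩ := exists_walk_of_wdist_le h1
    by_cases he : s(u, b) ∈ w.edges
    · have husup : u ∈ w.support := w.fst_mem_support_of_mem_edges he
      have := dist_le_of_mem_support hconn w husup
      omega
    · exfalso
      have hedges : ∀ e ∈ w.edges, e ∈ (G ⊔ S').edgeSet := by
        intro e hew
        have heGS : e ∈ (G ⊔ S).edgeSet := w.edges_subset_edgeSet hew
        rw [SimpleGraph.edgeSet_sup] at heGS ⊢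
        rcases heGS with hG | hS
        · exact Or.inl hG
        · refine Or.inr ?_
          induction e using Sym2.ind with
          | _ a c =>
            rw [SimpleGraph.mem_edgeSet, hS'def, SimpleGraph.deleteEdges_adj]
            refine ⟨hS, ?_⟩
            simp only [Set.mem_singleton_iff]
            intro hcontra
            exact he (hcontra ▸ hew)
      have hle : wdist Γ (G ⊔ S') x y ≤ (t : ℕ∞) := by
        calc wdist Γ (G ⊔ S') x y ≤ (walkWeight Γ (G ⊔ S') (w.transfer _ hedges) : ℕ∞) :=
              wdist_le_walkWeight _
          _ = (walkWeight Γ (G ⊔ S) w : ℕ∞) := by rw [walkWeight_transfer]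
          _ ≤ (t : ℕ∞) := by exact_mod_cast hw
      exact absurd hle (not_le.mpr hlt)
end

section
/- Let Γ be a graph, G a weighted graph on V(Γ) with edge weights d_Γ, and t ≥ 1. Let S be any set of nonedges of G such that G+S has dilation at most t with respect to Γ. Then every vertex x that is in adjacent conflict in G (there is a Γ-neighbor y of x with d_G(x,y) > t) satisfies d_Γ(x,u) ≤ t for some endpoint u of an edge of S; i.e., V_c ⊆ N_Γ^t(V_S). -/
open SimpleGraph

lemma key_first_S_edge {V : Type*} (Γ G S : SimpleGraph V) (hconn : Γ.Connected) (y : V) :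
    ∀ (a : V) (p : (G ⊔ S).Walk a y),
      (∃ q : G.Walk a y, walkWeight Γ G q = walkWeight Γ (G ⊔ S) p) ∨
      (∃ u, (∃ b, S.Adj u b) ∧ Γ.dist a u ≤ walkWeight Γ (G ⊔ S) p) := by
  intro a p
  induction p with
  | nil => exact Or.inl ⟨.nil, rfl⟩
  | cons h p ih =>
    rename_i a v _
    rcases h with hG | hS
    · rcases ih with ⟨q, hq⟩ | ⟨u, hu, hd⟩
      · exact Or.inl ⟨.cons hG q, by simp [walkWeight, hq]⟩
      · refine Or.inr ⟨u, hu, ?_⟩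
        calc Γ.dist a u ≤ Γ.dist a v + Γ.dist v u := hconn.dist_triangle
          _ ≤ Γ.dist a v + walkWeight Γ (G ⊔ S) p := by omega
          _ = walkWeight Γ (G ⊔ S) (.cons (Or.inl hG) p) := rfl
    · exact Or.inr ⟨a, ⟨v, hS⟩, by simp [walkWeight, SimpleGraph.dist_self]⟩

/-- Every vertex in adjacent conflict lies within `Γ`-distance `t` of some endpoint of
the augmentation set: `V_c ⊆ N_Γ^t(V_S)`. -/
theorem conflicts_near_endpoints {V : Type*} [Fintype V]
    (Γ G S : SimpleGraph V) (hconn : Γ.Connected) (t : ℕ) (ht : 1 ≤ t)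
    (hnonedge : ∀ x y : V, S.Adj x y → ¬ G.Adj x y)
    (hdil : ∀ u v : V, wdist Γ (G ⊔ S) u v ≤ (t : ℕ∞) * (Γ.dist u v : ℕ∞)) :
    ∀ x y : V, Γ.Adj x y → (t : ℕ∞) < wdist Γ G x y →
      ∃ u : V, (∃ b, S.Adj u b) ∧ Γ.dist x u ≤ t := by
  intro x y hxy hconf
  have hd1 : Γ.dist x y = 1 := dist_eq_one_iff_adj.mpr hxy
  have hle : wdist Γ (G ⊔ S) x y ≤ (t : ℕ∞) := by
    have := hdil x y
    rwa [hd1, Nat.cast_one, mul_one] at this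
  have hex : ∃ p : (G ⊔ S).Walk x y, walkWeight Γ (G ⊔ S) p ≤ t := by
    by_contra hno
    push_neg at hno
    have : (t : ℕ∞) + 1 ≤ wdist Γ (G ⊔ S) x y := by
      refine le_iInf fun p => ?_
      have := hno p
      exact_mod_cast this
    have h2 : (t : ℕ∞) + 1 ≤ (t : ℕ∞) := this.trans hle
    have h3 : t + 1 ≤ t := by exact_mod_cast h2
    omega
  obtain ⟨p, hp⟩ := hex
  rcases key_first_S_edge Γ G S hconn y x p with ⟨q, hq⟩ | ⟨u, hu, hd⟩
  · exfalso
    have : wdist Γ G x y ≤ (walkWeight Γ G q : ℕ∞) := iInf_le _ q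
    rw [hq] at this
    exact absurd (this.trans (by exact_mod_cast hp)) (not_le.mpr hconf)
  · exact ⟨u, hu, hd.trans hp⟩
end

section
/- Let Γ be a graph, G a weighted graph on V(Γ) with edge weights d_Γ, and t ≥ 1. Let S be a set of edges such that G+S has dilation at most t. Then every vertex x in adjacent conflict in G satisfies hop_G(x,u) ≤ t for some endpoint u of an edge of S, where hop_G counts the number of edges of G along a path; i.e., V_c ⊆ N_G^t(V_S). -/
open SimpleGraph

/-- Key induction: a walk in `G ⊔ S` either projects to a `G`-walk of no greater
weight, or has a prefix in `G` ending at an endpoint of an `S`-edge, with hop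
count at most the weight. -/
lemma split_walk {V : Type*} (Γ G S : SimpleGraph V) (hconn : Γ.Connected) :
    ∀ {x y : V} (p : (G ⊔ S).Walk x y),
      (∃ q : G.Walk x y, walkWeight Γ G q ≤ walkWeight Γ (G ⊔ S) p) ∨
      (∃ u, (∃ b, S.Adj u b) ∧ ∃ q : G.Walk x u,
        q.length ≤ walkWeight Γ (G ⊔ S) p) := by
  intro x y p
  induction p with
  | nil => exact Or.inl ⟨SimpleGraph.Walk.nil, le_refl _⟩
  | @cons x v y h p ih =>
    by_cases hS : S.Adj x v
    · exact Or.inr ⟨x, ⟨v, hS⟩, SimpleGraph.Walk.nil, Nat.zero_le _⟩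
    · have hG : G.Adj x v := h.resolve_right hS
      have hd : 1 ≤ Γ.dist x v := hconn.pos_dist_of_ne hG.ne
      rcases ih with ⟨q, hq⟩ | ⟨u, hu, q, hq⟩
      · exact Or.inl ⟨SimpleGraph.Walk.cons hG q, by
          simp only [walkWeight]; omega⟩
      · exact Or.inr ⟨u, hu, SimpleGraph.Walk.cons hG q, by
          simp only [walkWeight, SimpleGraph.Walk.length_cons]; omega⟩

/-- Every vertex in adjacent conflict lies within hop-distance `t` in `G` of some
endpoint of the augmentation set: `V_c ⊆ N_G^t(V_S)`. -/
theorem conflicts_near_endpoints_hop {V : Type*} [Fintype V]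
    (Γ G S : SimpleGraph V) (hconn : Γ.Connected) (t : ℕ) (ht : 1 ≤ t)
    (hdil : ∀ u v : V, wdist Γ (G ⊔ S) u v ≤ (t : ℕ∞) * (Γ.dist u v : ℕ∞)) :
    ∀ x y : V, Γ.Adj x y → (t : ℕ∞) < wdist Γ G x y →
      ∃ u : V, (∃ b, S.Adj u b) ∧ G.Reachable x u ∧ G.dist x u ≤ t := by
  intro x y hxy hbig
  have hd1 : Γ.dist x y = 1 := SimpleGraph.dist_eq_one_iff_adj.mpr hxy
  have hle : wdist Γ (G ⊔ S) x y ≤ (t : ℕ∞) := by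
    have := hdil x y
    rwa [hd1, Nat.cast_one, mul_one] at this
  -- extract a witness walk of weight ≤ t
  have hw : ∃ p : (G ⊔ S).Walk x y, walkWeight Γ (G ⊔ S) p ≤ t := by
    by_contra hcon
    push_neg at hcon
    have : (t : ℕ∞) + 1 ≤ wdist Γ (G ⊔ S) x y := by
      refine le_iInf fun p => ?_
      have := hcon p
      have : t + 1 ≤ walkWeight Γ (G ⊔ S) p := this
      exact_mod_cast Nat.cast_le.mpr this
    have h2 : (t : ℕ∞) + 1 ≤ (t : ℕ∞) := le_trans this hle
    exact absurd h2 (by simp [ENat.add_one_le_iff])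
  obtain ⟨p, hp⟩ := hw
  rcases split_walk Γ G S hconn p with ⟨q, hq⟩ | ⟨u, hu, q, hq⟩
  · exfalso
    have : wdist Γ G x y ≤ (t : ℕ∞) := by
      refine le_trans (iInf_le _ q) ?_
      exact_mod_cast le_trans hq hp
    exact absurd this (not_le.mpr hbig)
  · exact ⟨u, hu, ⟨q⟩, le_trans (SimpleGraph.dist_le q) (le_trans hq hp)⟩
end

section
/- With the same construction (Γ a star centered at c over V(H), G = (V(H)∪{c}, E(H)) with edge weights 2), suppose S is a set of at most k added edges such that G+S has dilation at most 3 with respect to Γ, and suppose moreover that S contains no edge (u,v) with u,v ∈ V(H) such that (u,c) ∈ S. Then the set V_C = {v ∈ V(H) : (v,c) ∈ S} is a dominating set of H of size at most k. -/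
open SimpleGraph

/-!
Dilation ≤ 3 gives every leaf `u` a walk of weight ≤ 3 to the centre of the star. Leaf–centre
edges weigh 1 and leaf–leaf edges weigh 2, so such a walk is either the edge `u`–centre, or an
edge `u`–`v` followed by the edge `v`–centre. Centre edges of `G ⊔ S` all lie in `S`, and in the
second case the edge `u`–`v` cannot lie in `S` next to the centre edge at `v`, so it is an edge
of `H`: `v` dominates `u`.
-/

namespace SimpleGraph

variable {V : Type*}

lemma dist_starGraph_center {r v : V} (h : v ≠ r) : (starGraph r).dist v r = 1 :=
  dist_eq_one_iff_adj.mpr (starGraph_center_adj' h.symm)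

lemma dist_starGraph_of_ne {r u v : V} (huv : u ≠ v) (hu : u ≠ r) (hv : v ≠ r) :
    (starGraph r).dist u v = 2 := by
  have : (starGraph r).edist u v = 2 :=
    edist_eq_two_iff.mpr ⟨huv, by simp [hu, hv],
      ⟨r, starGraph_center_adj' hu.symm, starGraph_center_adj' hv.symm⟩⟩
  simp [dist, this]

lemma ncard_setOf_adj_none_le_ncard_edgeSet [Finite V] (S : SimpleGraph (Option V)) :
    {v : V | S.Adj (some v) none}.ncard ≤ S.edgeSet.ncard :=
  Set.ncard_le_ncard_of_injOn (fun v ↦ s(some v, none)) (fun _ hv ↦ hv)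
    (fun _ _ _ _ h ↦ by simpa using h) (Set.toFinite _)

end SimpleGraph

section WalkWeight

variable {V : Type*} {Γ G : SimpleGraph V}

@[simp]
lemma walkWeight_cons {u v w : V} (h : G.Adj u v) (p : G.Walk v w) :
    walkWeight Γ G (.cons h p) = Γ.dist u v + walkWeight Γ G p :=
  rfl

lemma exists_walkWeight_le_of_wdist_le {x y : V} {n : ℕ} (h : wdist Γ G x y ≤ n) :
    ∃ p : G.Walk x y, walkWeight Γ G p ≤ n := by
  obtain ⟨p, hp⟩ := iInf_lt_iff.mp (h.trans_lt (ENat.natCast_lt_natCast.mpr n.lt_succ_self))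
  exact ⟨p, Nat.lt_succ_iff.mp (by exact_mod_cast hp)⟩

variable {r : V}

lemma adj_of_walkWeight_starGraph_le_one {v : V} (p : G.Walk v r) (hv : v ≠ r)
    (hp : walkWeight (starGraph r) G p ≤ 1) : G.Adj v r := by
  cases p with
  | nil => exact absurd rfl hv
  | @cons _ w _ h q =>
    by_cases hw : w = r
    · exact hw ▸ h
    · rw [walkWeight_cons, dist_starGraph_of_ne h.ne hv hw] at hp
      omega

lemma adj_or_exists_of_walkWeight_starGraph_le_three {u : V} (p : G.Walk u r) (hu : u ≠ r)
    (hp : walkWeight (starGraph r) G p ≤ 3) : G.Adj u r ∨ ∃ v ≠ r, G.Adj u v ∧ G.Adj v r := by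
  cases p with
  | nil => exact absurd rfl hu
  | @cons _ v _ h q =>
    by_cases hv : v = r
    · exact .inl (hv ▸ h)
    · rw [walkWeight_cons, dist_starGraph_of_ne h.ne hu hv] at hp
      exact .inr ⟨v, hv, h, adj_of_walkWeight_starGraph_le_one q hv (by omega)⟩

end WalkWeight

/-- Star construction, converse direction: if `S` is a set of at most `k` added edges
giving dilation at most `3`, and `S` never contains both an edge `(u,v)` inside `V(H)`
and an edge `(u,c)`, then the neighbors of the center `c = none` in `S` form a
dominating set of `H` of size at most `k`. -/
theorem dilation_three_gives_dominating_set {V : Type*} [Fintype V]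
    (H : SimpleGraph V) (k : ℕ)
    (Γ G S : SimpleGraph (Option V))
    (hΓ : ∀ x y : Option V, Γ.Adj x y ↔ x ≠ y ∧ (x = none ∨ y = none))
    (hG : ∀ x y : Option V, G.Adj x y ↔
      ∃ u v : V, x = some u ∧ y = some v ∧ H.Adj u v)
    (hSk : S.edgeSet.ncard ≤ k)
    (hdil : ∀ x y : Option V, wdist Γ (G ⊔ S) x y ≤ (3 : ℕ∞) * (Γ.dist x y : ℕ∞))
    (hrepl : ∀ u v : V, S.Adj (some u) (some v) →
      ¬ S.Adj (some u) none ∧ ¬ S.Adj (some v) none) :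
    {v : V | S.Adj (some v) none}.ncard ≤ k ∧
    (∀ u : V, S.Adj (some u) none ∨
      ∃ v : V, S.Adj (some v) none ∧ H.Adj v u) := by
  obtain rfl : Γ = starGraph none := by ext; simp [hΓ]
  have hG_center (x : Option V) : ¬ G.Adj x none := by simp [hG]
  refine ⟨(ncard_setOf_adj_none_le_ncard_edgeSet S).trans hSk, fun u ↦ ?_⟩
  have hu : wdist (starGraph none) (G ⊔ S) (some u) none ≤ (3 : ℕ) := by
    simpa [dist_starGraph_center] using hdil (some u) none
  obtain ⟨p, hp⟩ := exists_walkWeight_le_of_wdist_le hu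
  rcases adj_or_exists_of_walkWeight_starGraph_le_three p (Option.some_ne_none u) hp with
    h | ⟨_ | w, hw, huw, hwc⟩
  · exact .inl (h.resolve_left (hG_center _))
  · exact absurd rfl hw
  · have hwS : S.Adj (some w) none := hwc.resolve_left (hG_center _)
    refine .inr ⟨w, hwS, ?_⟩
    rcases huw with huwG | huwS
    · simpa [hG, adj_comm] using huwG
    · exact absurd hwS (hrepl u w huwS).2
end

section
/- Let H be a connected unweighted graph, let Γ = H, and let G be the edgeless graph on V(H) (weighted by d_Γ on any edges that get added). Then for any set T of edges with T ⊆ E(Γ): the subgraph H' = (V(H), T) satisfies d_{H'}(u,v) ≤ 2·d_H(u,v) for all u,v if and only if G+T has dilation at most 2 with respect to Γ. Moreover, if T is a minimal dilation 2-augmentation set for (G,Γ), then T ⊆ E(Γ). -/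
/-!
An edge of `T ≤ H` has weight `H.dist = 1`, so weighted distances in `T` are its hop distances
`T.edist`, and both sides of the equivalence say `T.edist u v ≤ 2 * H.dist u v`.
For minimality it suffices, by the triangle inequality along shortest `H`-walks, to keep a walk
of weight `≤ 2` between `H`-neighbours. If `pq ∈ T` is not an `H`-edge, its weight is `≥ 2`, so
such a walk only uses `pq` if it is the single edge `pq`, impossible for `H`-neighbours; hence
`pq` can be deleted from `T`.
-/

open SimpleGraph

namespace SimpleGraph

variable {V : Type*} {Γ G : SimpleGraph V}

lemma dist_eq_of_sym2_eq {a b c d : V} (h : s(a, b) = s(c, d)) : Γ.dist a b = Γ.dist c d := by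
  rcases Sym2.eq_iff.1 h with ⟨rfl, rfl⟩ | ⟨rfl, rfl⟩
  exacts [rfl, Γ.dist_comm]

lemma walkWeight_append {x y z : V} (p : G.Walk x y) (q : G.Walk y z) :
    walkWeight Γ G (p.append q) = walkWeight Γ G p + walkWeight Γ G q := by
  induction p with
  | nil => simp [walkWeight]
  | cons h p ih => simp only [Walk.cons_append, walkWeight, ih, add_assoc]

lemma walkWeight_transfer {G' : SimpleGraph V} {x y : V} (p : G.Walk x y)
    (hp : ∀ e ∈ p.edges, e ∈ G'.edgeSet) :
    walkWeight Γ G' (p.transfer G' hp) = walkWeight Γ G p := by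
  induction p with
  | nil => rfl
  | cons h p ih => simp [Walk.transfer, walkWeight, ih]

lemma walkWeight_eq_length (hG : G ≤ Γ) {x y : V} (p : G.Walk x y) :
    walkWeight Γ G p = p.length := by
  induction p with
  | nil => rfl
  | cons h p ih => simp [walkWeight, ih, dist_eq_one_iff_adj.2 (hG h), add_comm]

lemma length_le_walkWeight (hΓ : Γ.Connected) {x y : V} (p : G.Walk x y) :
    p.length ≤ walkWeight Γ G p := by
  induction p with
  | nil => simp [walkWeight]
  | cons h p ih =>
    have := hΓ.pos_dist_of_ne h.ne
    simp only [Walk.length_cons, walkWeight]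
    omega

lemma dist_le_walkWeight_of_mem_edges {a b x y : V} (p : G.Walk x y)
    (hmem : s(a, b) ∈ p.edges) : Γ.dist a b ≤ walkWeight Γ G p := by
  induction p with
  | nil => simp at hmem
  | cons h p ih =>
    rw [Walk.edges_cons, List.mem_cons] at hmem
    rcases hmem with heq | hmem
    · simp [walkWeight, dist_eq_of_sym2_eq heq]
    · exact (ih hmem).trans (Nat.le_add_left _ _)

lemma Walk.sym2_eq_of_walkWeight_le_dist (hΓ : Γ.Connected) {a b x y : V} (p : G.Walk x y)
    (hmem : s(a, b) ∈ p.edges) (hw : walkWeight Γ G p ≤ Γ.dist a b) : s(x, y) = s(a, b) := by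
  cases p with
  | nil => simp at hmem
  | cons h p =>
    rw [Walk.edges_cons, List.mem_cons] at hmem
    rw [walkWeight] at hw
    rcases hmem with heq | hmem
    · rw [dist_eq_of_sym2_eq heq] at hw
      have hp : p.length = 0 := by have := length_le_walkWeight hΓ p; omega
      cases Walk.eq_of_length_eq_zero hp
      exact heq.symm
    · have := dist_le_walkWeight_of_mem_edges (Γ := Γ) p hmem
      have := hΓ.pos_dist_of_ne h.ne
      omega

lemma wdist_le_walkWeight {x y : V} (p : G.Walk x y) : wdist Γ G x y ≤ walkWeight Γ G p :=
  iInf_le _ p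

lemma exists_walkWeight_eq_wdist {x y : V} (h : wdist Γ G x y ≠ ⊤) :
    ∃ p : G.Walk x y, (walkWeight Γ G p : ℕ∞) = wdist Γ G x y := by
  have : Nonempty (G.Walk x y) := by
    by_contra hempty
    rw [not_nonempty_iff] at hempty
    exact h (iInf_of_empty _)
  exact ciInf_mem _

lemma wdist_self (x : V) : wdist Γ G x x = 0 :=
  nonpos_iff_eq_zero.1 (wdist_le_walkWeight Walk.nil)

lemma wdist_triangle (x y z : V) : wdist Γ G x z ≤ wdist Γ G x y + wdist Γ G y z :=
  ENat.le_iInf_add_iInf fun p q =>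
    (wdist_le_walkWeight (p.append q)).trans (by rw [walkWeight_append]; push_cast; rfl)

lemma wdist_eq_edist (hG : G ≤ Γ) (x y : V) : wdist Γ G x y = G.edist x y := by
  simp only [wdist, edist, walkWeight_eq_length hG]

lemma wdist_le_mul_length {t : ℕ∞} (hadj : ∀ u v, Γ.Adj u v → wdist Γ G u v ≤ t) {x y : V}
    (p : Γ.Walk x y) : wdist Γ G x y ≤ t * p.length := by
  induction p with
  | nil => simp [wdist_self]
  | @cons x w y h p ih =>
    calc wdist Γ G x y ≤ wdist Γ G x w + wdist Γ G w y := wdist_triangle x w y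
      _ ≤ t + t * p.length := add_le_add (hadj x w h) ih
      _ = t * (Walk.cons h p).length := by rw [Walk.length_cons]; push_cast; ring

lemma wdist_le_mul_dist (hΓ : Γ.Connected) {t : ℕ∞}
    (hadj : ∀ u v, Γ.Adj u v → wdist Γ G u v ≤ t) (x y : V) :
    wdist Γ G x y ≤ t * Γ.dist x y := by
  obtain ⟨p, hp⟩ := hΓ.exists_walk_length_eq_dist x y
  exact hp ▸ wdist_le_mul_length hadj p

/-- A walk of weight at most `Γ.dist a b` cannot use the edge `s(a, b)` unless it is that edge. -/
lemma wdist_deleteEdges_le (hΓ : Γ.Connected) {a b u v : V} {n : ℕ}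
    (hw : wdist Γ G u v ≤ n) (hn : n ≤ Γ.dist a b) (hne : s(u, v) ≠ s(a, b)) :
    wdist Γ (G.deleteEdges {s(a, b)}) u v ≤ n := by
  obtain ⟨p, hp⟩ := exists_walkWeight_eq_wdist (hw.trans_lt (ENat.natCast_lt_top n)).ne
  have hpn : walkWeight Γ G p ≤ n := by exact_mod_cast hp ▸ hw
  have hnot : s(a, b) ∉ p.edges := fun hmem =>
    hne (p.sym2_eq_of_walkWeight_le_dist hΓ hmem (hpn.trans hn))
  calc wdist Γ (G.deleteEdges {s(a, b)}) u v
      ≤ walkWeight Γ (G.deleteEdges {s(a, b)}) (p.toDeleteEdge _ hnot) := wdist_le_walkWeight _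
    _ ≤ n := by rw [walkWeight_transfer]; exact_mod_cast hpn

lemma reachable_and_dist_le_iff_edist_le {u v : V} {n : ℕ} :
    G.Reachable u v ∧ G.dist u v ≤ n ↔ G.edist u v ≤ n := by
  constructor
  · rintro ⟨hr, hd⟩
    rw [← hr.coe_dist_eq_edist]
    exact_mod_cast hd
  · intro h
    have hr := edist_ne_top_iff_reachable.1 (h.trans_lt (ENat.natCast_lt_top n)).ne
    rw [← hr.coe_dist_eq_edist] at h
    exact ⟨hr, by exact_mod_cast h⟩

end SimpleGraph

theorem spanner_iff_dilation_for_empty_graph_general {V : Type*}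
    (H : SimpleGraph V) (hconn : H.Connected) :
    (∀ T : SimpleGraph V, T ≤ H →
      ((∀ u v : V, T.Reachable u v ∧ T.dist u v ≤ 2 * H.dist u v) ↔
        (∀ u v : V, wdist H ((⊥ : SimpleGraph V) ⊔ T) u v ≤
          (2 : ℕ∞) * (H.dist u v : ℕ∞)))) ∧
    (∀ T : SimpleGraph V,
      (∀ u v : V, wdist H ((⊥ : SimpleGraph V) ⊔ T) u v ≤
        (2 : ℕ∞) * (H.dist u v : ℕ∞)) →
      (∀ T' : SimpleGraph V, T' < T →
        ¬ (∀ u v : V, wdist H ((⊥ : SimpleGraph V) ⊔ T') u v ≤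
          (2 : ℕ∞) * (H.dist u v : ℕ∞))) →
      T ≤ H) := by
  simp only [bot_sup_eq]
  refine ⟨fun T hT => forall₂_congr fun u v => ?_, fun T hT hmin => ?_⟩
  · rw [wdist_eq_edist hT, reachable_and_dist_le_iff_edist_le]
    push_cast
    rfl
  intro p q hpq
  by_contra hHpq
  have hdist : 2 ≤ H.dist p q := hconn.one_lt_dist_of_ne_of_not_adj hpq.ne hHpq
  refine hmin (T.deleteEdges {s(p, q)})
    ((deleteEdges_le _).lt_of_ne fun h => Set.disjoint_left.1 (deleteEdges_eq_self.1 h) hpq rfl)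
    (wdist_le_mul_dist hconn fun u v huv => ?_)
  have h2 : wdist H T u v ≤ (2 : ℕ) := by simpa [dist_eq_one_iff_adj.2 huv] using hT u v
  exact wdist_deleteEdges_le hconn h2 hdist fun h => hHpq ((H.adj_congr_of_sym2 h).1 huv)

/-- For the empty graph `G = ⊥` over the metric of a connected graph `H = Γ`:
a subset `T ⊆ E(H)` is a `2`-spanner of `H` iff `⊥ + T` has dilation at most `2`;
moreover any minimal dilation `2`-augmentation set `T` satisfies `T ⊆ E(H)`. -/
theorem spanner_iff_dilation_for_empty_graph {V : Type*} [Fintype V]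
    (H : SimpleGraph V) (hconn : H.Connected) :
    (∀ T : SimpleGraph V, T ≤ H →
      ((∀ u v : V, T.Reachable u v ∧ T.dist u v ≤ 2 * H.dist u v) ↔
        (∀ u v : V, wdist H ((⊥ : SimpleGraph V) ⊔ T) u v ≤
          (2 : ℕ∞) * (H.dist u v : ℕ∞)))) ∧
    (∀ T : SimpleGraph V,
      (∀ u v : V, wdist H ((⊥ : SimpleGraph V) ⊔ T) u v ≤
        (2 : ℕ∞) * (H.dist u v : ℕ∞)) →
      (∀ T' : SimpleGraph V, T' < T →
        ¬ (∀ u v : V, wdist H ((⊥ : SimpleGraph V) ⊔ T') u v ≤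
          (2 : ℕ∞) * (H.dist u v : ℕ∞))) →
      T ≤ H) :=
  spanner_iff_dilation_for_empty_graph_general H hconn
end

section
/- In the reduction from Multicolored Clique: let Q be a clique of H with vertex set {v_1,…,v_k}, v_i ∈ V_i, and let S' = E(Q) ∪ {(v_i,u) : i ∈ [k], u ∈ U_i} be added to G (where G consists of the star edges E_c from center c to H_G ∪ W_1 ∪ … ∪ W_k). Then G + S' has dilation at most 3 with respect to Γ: for every pair (a,b) of Γ-adjacent vertices, d_{G+S'}(a,b) ≤ 3. -/
open SimpleGraph

/-- Vertices of the Multicolored Clique reduction: the vertices of `H` (`orig`), the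
sets `U_i` of size `k²` (`mid`), the sets `W_i` of size `3k³` (`far`), and the
center `ctr = c`. -/
inductive RVert (A : Type*) (k : ℕ) : Type _ where
  | orig : A → RVert A k
  | mid : Fin k → Fin (k ^ 2) → RVert A k
  | far : Fin k → Fin (3 * k ^ 3) → RVert A k
  | ctr : RVert A k

/-- Adjacency relation generating `Γ`: edges of `H`; all edges between `V_i` and
`U_i`; all edges between `U_i` and `U_j` for `i ≠ j`; all edges between `U_i` and
`W_i`; and all edges from `c` to `V(H) ∪ ⋃ W_i`. -/
def gammaRel {A : Type*} {k : ℕ} (H : SimpleGraph A) (col : A → Fin k) :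
    RVert A k → RVert A k → Prop
  | .orig a, .orig b => H.Adj a b
  | .orig a, .mid i _ => col a = i
  | .mid i _, .mid j _ => i ≠ j
  | .mid i _, .far j _ => i = j
  | .ctr, .orig _ => True
  | .ctr, .far _ _ => True
  | _, _ => False

/-- Adjacency relation generating `G`: only the edges incident to the center `c`. -/
def cRel (A : Type*) (k : ℕ) : RVert A k → RVert A k → Prop
  | .ctr, .orig _ => True
  | .ctr, .far _ _ => True
  | _, _ => False

/-- The metric graph `Γ` of the reduction. -/
def gammaGraph {A : Type*} {k : ℕ} (H : SimpleGraph A) (col : A → Fin k) :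
    SimpleGraph (RVert A k) :=
  SimpleGraph.fromRel (gammaRel H col)

/-- The input graph `G` of the reduction (a star centered at `c` plus isolated
vertices). -/
def inputGraph (A : Type*) (k : ℕ) : SimpleGraph (RVert A k) :=
  SimpleGraph.fromRel (cRel A k)

/-- Solution edges built from a multicolored clique `v : Fin k → A`: the clique edges
`E(Q)` plus all edges from `v i` to `U_i`. -/
def solRel {A : Type*} {k : ℕ} (v : Fin k → A) : RVert A k → RVert A k → Prop
  | .orig a, .orig b => ∃ i j : Fin k, i ≠ j ∧ a = v i ∧ b = v j
  | .orig a, .mid i _ => a = v i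
  | _, _ => False

/-- If `{v 1, …, v k}` is a multicolored clique of `H`, then adding
`E(Q) ∪ {(v i, u) : u ∈ U_i}` to `G` yields dilation at most `3`: every
`Γ`-adjacent pair is at weighted distance at most `3` in `G + S'`. -/
theorem multicolored_clique_gives_dilation_three {A : Type*} [Fintype A]
    (k : ℕ) (hk : 2 ≤ k) (H : SimpleGraph A) (col : A → Fin k)
    (v : Fin k → A) (hcol : ∀ i : Fin k, col (v i) = i)
    (hclique : ∀ i j : Fin k, i ≠ j → H.Adj (v i) (v j)) :
    ∀ x y : RVert A k, (gammaGraph H col).Adj x y →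
      wdist (gammaGraph H col)
        (inputGraph A k ⊔ SimpleGraph.fromRel (solRel v)) x y ≤ 3 := by
  intro x y hxy
  classical
  set Γ := gammaGraph H col with hΓdef
  set G' := inputGraph A k ⊔ SimpleGraph.fromRel (solRel v) with hG'def
  -- Γ-adjacency helpers
  have gOC : ∀ a : A, Γ.Adj (.orig a) .ctr := by
    intro a
    simp [hΓdef, gammaGraph, SimpleGraph.fromRel_adj, gammaRel]
  have gCO : ∀ a : A, Γ.Adj .ctr (.orig a) := fun a => (gOC a).symm
  have gCF : ∀ (i : Fin k) (w : Fin (3 * k ^ 3)), Γ.Adj .ctr (.far i w) := by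
    intro i w
    simp [hΓdef, gammaGraph, SimpleGraph.fromRel_adj, gammaRel]
  have gOM : ∀ (i : Fin k) (u : Fin (k ^ 2)), Γ.Adj (.orig (v i)) (.mid i u) := by
    intro i u
    simp [hΓdef, gammaGraph, SimpleGraph.fromRel_adj, gammaRel, hcol]
  have gOO : ∀ i j : Fin k, i ≠ j → Γ.Adj (.orig (v i)) (.orig (v j)) := by
    intro i j hij
    have := hclique i j hij
    simp [hΓdef, gammaGraph, SimpleGraph.fromRel_adj, gammaRel, this, this.ne]
  -- G'-adjacency helpers
  have aOC : ∀ a : A, G'.Adj (.orig a) .ctr := by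
    intro a
    exact Or.inl (by simp [inputGraph, SimpleGraph.fromRel_adj, cRel])
  have aCO : ∀ a : A, G'.Adj .ctr (.orig a) := fun a => (aOC a).symm
  have aCF : ∀ (i : Fin k) (w : Fin (3 * k ^ 3)), G'.Adj .ctr (.far i w) := by
    intro i w
    exact Or.inl (by simp [inputGraph, SimpleGraph.fromRel_adj, cRel])
  have aOM : ∀ (i : Fin k) (u : Fin (k ^ 2)), G'.Adj (.orig (v i)) (.mid i u) := by
    intro i u
    exact Or.inr (by simp [SimpleGraph.fromRel_adj, solRel])
  have aOO : ∀ i j : Fin k, i ≠ j → G'.Adj (.orig (v i)) (.orig (v j)) := by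
    intro i j hij
    refine Or.inr ?_
    rw [SimpleGraph.fromRel_adj]
    refine ⟨by simpa using (hclique i j hij).ne, Or.inl ⟨i, j, hij, rfl, rfl⟩⟩
  -- distance-one rewriting
  have d1 : ∀ {p q : RVert A k}, Γ.Adj p q → Γ.dist p q = 1 := fun h =>
    SimpleGraph.dist_eq_one_iff_adj.2 h
  -- bound via an explicit walk
  have bound : ∀ {p : G'.Walk x y},
      (walkWeight Γ G' p : ℕ∞) ≤ 3 → wdist Γ G' x y ≤ 3 := by
    intro p hp
    exact le_trans (iInf_le _ p) hp
  obtain ⟨hne, hrel⟩ := (SimpleGraph.fromRel_adj _ _ _).1 hxy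
  cases x with
  | orig a =>
    cases y with
    | orig b =>
      exact bound (p := .cons (aOC a) (.cons (aCO b) .nil))
        (by simp [walkWeight, d1 (gOC a), d1 (gCO b)] <;> norm_num)
    | mid i u =>
      have hai : col a = i := by
        simpa [gammaRel] using hrel
      exact bound (p := .cons (aOC a) (.cons (aCO (v i)) (.cons (aOM i u) .nil)))
        (by simp [walkWeight, d1 (gOC a), d1 (gCO (v i)), d1 (gOM i u)] <;> norm_num)
    | far i w => simp [gammaRel] at hrel
    | ctr =>
      exact bound (p := .cons (aOC a) .nil) (by simp [walkWeight, d1 (gOC a)] <;> norm_num)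
  | mid i u =>
    cases y with
    | orig b =>
      exact bound (p := .cons (aOM i u).symm (.cons (aOC (v i)) (.cons (aCO b) .nil)))
        (by simp [walkWeight, d1 (gOM i u).symm, d1 (gOC (v i)), d1 (gCO b)] <;> norm_num)
    | mid j w =>
      have hij : i ≠ j := by
        rcases hrel with h | h
        · simpa [gammaRel] using h
        · have h' : j ≠ i := by simpa [gammaRel] using h
          exact h'.symm
      exact bound
        (p := .cons (aOM i u).symm (.cons (aOO i j hij) (.cons (aOM j w) .nil)))
        (by simp [walkWeight, d1 (gOM i u).symm, d1 (gOO i j hij), d1 (gOM j w)] <;> norm_num)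
    | far j w =>
      have hij : i = j := by simpa [gammaRel] using hrel
      subst hij
      exact bound
        (p := .cons (aOM i u).symm (.cons (aOC (v i)) (.cons (aCF i w) .nil)))
        (by simp [walkWeight, d1 (gOM i u).symm, d1 (gOC (v i)), d1 (gCF i w)] <;> norm_num)
    | ctr => simp [gammaRel] at hrel
  | far i w =>
    cases y with
    | orig b => simp [gammaRel] at hrel
    | mid j u =>
      have hij : j = i := by simpa [gammaRel] using hrel
      subst hij
      exact bound
        (p := .cons (aCF j w).symm (.cons (aCO (v j)) (.cons (aOM j u) .nil)))
        (by simp [walkWeight, d1 (gCF j w).symm, d1 (gCO (v j)), d1 (gOM j u)] <;> norm_num)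
    | far j u => simp [gammaRel] at hrel
    | ctr =>
      exact bound (p := .cons (aCF i w).symm .nil)
        (by simp [walkWeight, d1 (gCF i w).symm] <;> norm_num)
  | ctr =>
    cases y with
    | orig b =>
      exact bound (p := .cons (aCO b) .nil) (by simp [walkWeight, d1 (gCO b)] <;> norm_num)
    | mid j u => simp [gammaRel] at hrel
    | far j u =>
      exact bound (p := .cons (aCF j u) .nil) (by simp [walkWeight, d1 (gCF j u)] <;> norm_num)
    | ctr => exact absurd rfl hne
end
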